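/- Under the five inequalities of the performance-estimation proof (interpolation inequalities between the triples (x₀,f₀,g₀), (x₁,f₁,g₁), (x*,f*,0), plus -g₀ᵀg₁ ≥ 0 and g₁ᵀ(x₀-x₁) ≥ 0, with 0 < μ < L), the following exact identity-based bound holds: f₁ - f* ≤ ((L-μ)/(L+μ))²(f₀-f*) - (μL(L+3μ)/(2(L+μ)²))‖x₀ - ((L+μ)/(L+3μ))x₁ - (2μ/(L+3μ))x* - ((3L+μ)/(L²+3μL))g₀ - ((L+μ)/(L²+3μL))g₁‖² - (2Lμ²/(L²+2Lμ-3μ²))‖x₁ - x* - ((L-μ)²/(2μL(L+μ)))g₀ - ((L+μ)/(2μL))g₁‖². -/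

import Mathlib

/-!
The weights `(L - μ)/(L + μ)`, `2μ(L - μ)/(L + μ)²`, `2μ/(L + μ)`, `2/(L + μ)` and `1` on the five
hypotheses are the dual multipliers of the performance-estimation problem: with them, the
claimed bound minus `f₁ - f*` is exactly the weighted sum of the slacks of the hypotheses, an
identity of quadratic forms in the Gram matrix of `x₀, x₁, x*, g₀, g₁`. The weights are
nonnegative when `0 < μ < L`, so the bound follows.
-/

open RealInnerProductSpace

/-- The `F_{μ,L}` interpolation inequality between the triples `(xi, fi, gi)` and
`(xj, fj, gj)`. -/
def InterpIneq {n : ℕ} (μ L : ℝ) (xi xj : EuclideanSpace ℝ (Fin n)) (fi fj : ℝ)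
    (gi gj : EuclideanSpace ℝ (Fin n)) : Prop :=
  fi ≥ fj + ⟪gj, xi - xj⟫ + 1 / (2 * (1 - μ / L)) *
    ((1 / L) * ‖gi - gj‖ ^ 2 + μ * ‖xi - xj‖ ^ 2 - (2 * μ / L) * ⟪gj - gi, xj - xi⟫)

section

variable {E : Type*} [NormedAddCommGroup E] [InnerProductSpace ℝ E]

noncomputable def interpGap (μ L : ℝ) (xi xj : E) (fi fj : ℝ) (gi gj : E) : ℝ :=
  fi - (fj + ⟪gj, xi - xj⟫ + 1 / (2 * (1 - μ / L)) *
    ((1 / L) * ‖gi - gj‖ ^ 2 + μ * ‖xi - xj‖ ^ 2 - (2 * μ / L) * ⟪gj - gi, xj - xi⟫))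

theorem bound_sub_eq_weighted_interpGap {μ L : ℝ} (hμ : μ ≠ 0) (hL : L ≠ 0) (hLμ : L - μ ≠ 0)
    (hLμ' : L + μ ≠ 0) (hL3μ : L + 3 * μ ≠ 0) (x₀ x₁ xstar g₀ g₁ : E) (f₀ f₁ fstar : ℝ) :
    ((L - μ) / (L + μ)) ^ 2 * (f₀ - fstar)
      - μ * L * (L + 3 * μ) / (2 * (L + μ) ^ 2) *
          ‖x₀ - ((L + μ) / (L + 3 * μ)) • x₁ - (2 * μ / (L + 3 * μ)) • xstar
            - ((3 * L + μ) / (L ^ 2 + 3 * μ * L)) • g₀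
            - ((L + μ) / (L ^ 2 + 3 * μ * L)) • g₁‖ ^ 2
      - 2 * L * μ ^ 2 / (L ^ 2 + 2 * L * μ - 3 * μ ^ 2) *
          ‖x₁ - xstar - ((L - μ) ^ 2 / (2 * μ * L * (L + μ))) • g₀
            - ((L + μ) / (2 * μ * L)) • g₁‖ ^ 2
      - (f₁ - fstar)
    = (L - μ) / (L + μ) * interpGap μ L x₀ x₁ f₀ f₁ g₀ g₁
      + 2 * μ * (L - μ) / (L + μ) ^ 2 * interpGap μ L xstar x₀ fstar f₀ 0 g₀
      + 2 * μ / (L + μ) * interpGap μ L xstar x₁ fstar f₁ 0 g₁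
      + 2 / (L + μ) * -⟪g₀, g₁⟫ + ⟪g₁, x₀ - x₁⟫ := by
  have hμL : 1 - μ / L ≠ 0 := by rw [one_sub_div hL]; exact div_ne_zero hLμ hL
  -- the form in which `field_simp` meets this denominator
  have hL3μ' : L + μ * 3 ≠ 0 := by rwa [mul_comm]
  rw [show L ^ 2 + 2 * L * μ - 3 * μ ^ 2 = (L - μ) * (L + 3 * μ) by ring,
    show L ^ 2 + 3 * μ * L = L * (L + 3 * μ) by ring]
  simp only [interpGap, ← real_inner_self_eq_norm_sq, inner_sub_left, inner_sub_right,
    real_inner_smul_left, real_inner_smul_right, inner_zero_left, inner_zero_right,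
    real_inner_comm x₀ x₁, real_inner_comm x₀ xstar, real_inner_comm x₁ xstar,
    real_inner_comm x₀ g₀, real_inner_comm x₁ g₀, real_inner_comm xstar g₀,
    real_inner_comm x₀ g₁, real_inner_comm x₁ g₁, real_inner_comm xstar g₁,
    real_inner_comm g₀ g₁]
  field_simp
  ring

end

theorem InterpIneq.interpGap_nonneg {n : ℕ} {μ L : ℝ} {xi xj gi gj : EuclideanSpace ℝ (Fin n)}
    {fi fj : ℝ} (h : InterpIneq μ L xi xj fi fj gi gj) :
    0 ≤ interpGap μ L xi xj fi fj gi gj :=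
  sub_nonneg.2 h

theorem stmt6 {n : ℕ} (μ L : ℝ) (hμ : 0 < μ) (hμL : μ < L)
    (x₀ x₁ xstar g₀ g₁ : EuclideanSpace ℝ (Fin n)) (f₀ f₁ fstar : ℝ)
    (h1 : InterpIneq μ L x₀ x₁ f₀ f₁ g₀ g₁)
    (h2 : InterpIneq μ L xstar x₀ fstar f₀ 0 g₀)
    (h3 : InterpIneq μ L xstar x₁ fstar f₁ 0 g₁)
    (h4 : -⟪g₀, g₁⟫ ≥ 0)
    (h5 : ⟪g₁, x₀ - x₁⟫ ≥ 0) :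
    f₁ - fstar ≤ ((L - μ) / (L + μ)) ^ 2 * (f₀ - fstar)
      - μ * L * (L + 3 * μ) / (2 * (L + μ) ^ 2) *
          ‖x₀ - ((L + μ) / (L + 3 * μ)) • x₁ - (2 * μ / (L + 3 * μ)) • xstar
            - ((3 * L + μ) / (L ^ 2 + 3 * μ * L)) • g₀
            - ((L + μ) / (L ^ 2 + 3 * μ * L)) • g₁‖ ^ 2
      - 2 * L * μ ^ 2 / (L ^ 2 + 2 * L * μ - 3 * μ ^ 2) *
          ‖x₁ - xstar - ((L - μ) ^ 2 / (2 * μ * L * (L + μ))) • g₀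
            - ((L + μ) / (2 * μ * L)) • g₁‖ ^ 2 := by
  have hL : 0 < L := hμ.trans hμL
  have hLμ : 0 < L - μ := sub_pos.2 hμL
  rw [← sub_nonneg, bound_sub_eq_weighted_interpGap hμ.ne' hL.ne' hLμ.ne' (by positivity)
    (by positivity)]
  have := h1.interpGap_nonneg
  have := h2.interpGap_nonneg
  have := h3.interpGap_nonneg
  positivity
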